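/- Let Γ be an m×m real symmetric positive definite matrix, Ĉ an n×n real symmetric positive semidefinite matrix, H an m×n real matrix, y ∈ ℝᵐ, v̂ ∈ ℝⁿ, F a k×n real matrix, G an l×n real matrix, f ∈ ℝᵏ and g ∈ ℝˡ; set y' = y − Hv̂. Suppose: (i) (a*, v*) is feasible for and minimizes ½(y' − Hv')ᵀΓ⁻¹(y' − Hv') + ½⟨a, v'⟩ over the nonempty set {(a, v') : Ĉa = v', F(v̂ + v') = f, G(v̂ + v') ≤ g componentwise}; (ii) for each ε > 0, v_ε ∈ ℝⁿ satisfies Fv_ε = f, Gv_ε ≤ g and minimizes J_ε(v) = ½(y − Hv)ᵀΓ⁻¹(y − Hv) + ½(v − v̂)ᵀ(Ĉ + εIₙ)⁻¹(v − v̂) over {v : Fv = f, Gv ≤ g}. Then v_ε converges to v̂ + v* as ε → 0 from the right. -/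

import Mathlib

/-!
Write `v₀ = vhat + C a*`, `M` for the optimal value of the limiting problem and
`P_ε = C + ε • 1`. Since `(C a)ᵀ P_ε⁻¹ (C a) ≤ aᵀ C a`, we have `J_ε v₀ ≤ M`. The penalty of `J_ε`
is strongly convex with modulus `(K + ε)⁻¹`, where `C ≤ K • 1`, so every minimizer over the convex
feasible set obeys the quadratic growth estimate `|v₀ - v_ε|² ≤ 4 (K + ε) (J_ε v₀ - J_ε v_ε)`.
The bound `J_ε v_ε ≤ M` controls the penalty and keeps `v_ε` bounded; a limit point `w` along a
sequence `ε → 0⁺` is feasible and, the range of `C` being closed, of the form `vhat + C b`.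
Fenchel's inequality with dual vector `b` bounds `J_ε v_ε` from below by a quantity tending to the
limiting objective at `b`, which is at least `M`; in the limit the growth estimate gives `w = v₀`.
-/

open Matrix Topology Filter Set

namespace Matrix

variable {ι : Type*}

lemma PosSemidef.posDef_add_smul_one [DecidableEq ι] {C : Matrix ι ι ℝ} {ε : ℝ}
    (hC : C.PosSemidef) (hε : 0 < ε) : (C + ε • 1).PosDef :=
  PosDef.posSemidef_add hC (PosDef.one.smul hε)

variable [Fintype ι]

lemma IsHermitian.dotProduct_mulVec_comm {A : Matrix ι ι ℝ} (hA : A.IsHermitian) (v w : ι → ℝ) :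
    v ⬝ᵥ A *ᵥ w = w ⬝ᵥ A *ᵥ v := by
  rw [dotProduct_comm, dotProduct_mulVec, ← mulVec_transpose]
  have : Aᵀ = A := by simpa [conjTranspose_eq_transpose_of_trivial] using hA.eq
  rw [this]

lemma PosSemidef.dotProduct_mulVec_self_nonneg {A : Matrix ι ι ℝ} (hA : A.PosSemidef)
    (x : ι → ℝ) : 0 ≤ x ⬝ᵥ A *ᵥ x := by
  simpa using hA.dotProduct_mulVec_nonneg x

lemma PosSemidef.convexOn_dotProduct_mulVec {A : Matrix ι ι ℝ} (hA : A.PosSemidef) :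
    ConvexOn ℝ univ fun x : ι → ℝ => x ⬝ᵥ A *ᵥ x := by
  refine ⟨convex_univ, fun x _ z _ a b ha hb hab => ?_⟩
  obtain rfl : b = 1 - a := by linarith
  have := mul_nonneg (mul_nonneg ha hb) (hA.dotProduct_mulVec_self_nonneg (x - z))
  simp only [mulVec_add, mulVec_sub, mulVec_smul, dotProduct_add, dotProduct_sub, add_dotProduct,
    sub_dotProduct, smul_dotProduct, dotProduct_smul, smul_eq_mul] at this ⊢
  nlinarith [hA.isHermitian.dotProduct_mulVec_comm x z]

lemma dotProduct_self_nonneg (x : ι → ℝ) : 0 ≤ x ⬝ᵥ x :=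
  Finset.sum_nonneg fun i _ => mul_self_nonneg (x i)

lemma sq_le_dotProduct_self (x : ι → ℝ) (i : ι) : x i ^ 2 ≤ x ⬝ᵥ x := by
  simpa [dotProduct, sq] using
    Finset.single_le_sum (fun j _ => mul_self_nonneg (x j)) (Finset.mem_univ i)

lemma exists_dotProduct_mulVec_le (C : Matrix ι ι ℝ) :
    ∃ K, 0 ≤ K ∧ ∀ x, x ⬝ᵥ C *ᵥ x ≤ K * (x ⬝ᵥ x) := by
  refine ⟨∑ i, ∑ j, |C i j|, by positivity, fun x => ?_⟩
  have hx : x ⬝ᵥ C *ᵥ x = ∑ i, ∑ j, C i j * (x i * x j) := by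
    simp only [dotProduct, mulVec, Finset.mul_sum]
    exact Finset.sum_congr rfl fun i _ => Finset.sum_congr rfl fun j _ => by ring
  rw [hx, Finset.sum_mul]
  refine Finset.sum_le_sum fun i _ => ?_
  rw [Finset.sum_mul]
  refine Finset.sum_le_sum fun j _ => ?_
  have hij : |x i * x j| ≤ x ⬝ᵥ x := by
    rw [abs_mul]
    nlinarith [sq_le_dotProduct_self x i, sq_le_dotProduct_self x j, sq_abs (x i), sq_abs (x j),
      sq_nonneg (|x i| - |x j|)]
  calc C i j * (x i * x j) ≤ |C i j| * |x i * x j| := by rw [← abs_mul]; exact le_abs_self _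
    _ ≤ |C i j| * (x ⬝ᵥ x) := by gcongr

lemma norm_le_sqrt_dotProduct_self (x : ι → ℝ) : ‖x‖ ≤ √(x ⬝ᵥ x) := by
  refine (pi_norm_le_iff_of_nonneg (Real.sqrt_nonneg _)).2 fun i => ?_
  rw [Real.norm_eq_abs, ← Real.sqrt_sq_eq_abs]
  exact Real.sqrt_le_sqrt (sq_le_dotProduct_self x i)

section Regularization

variable [DecidableEq ι] {C : Matrix ι ι ℝ} {ε : ℝ}

lemma PosDef.mulVec_inv_mulVec {P : Matrix ι ι ℝ} (hP : P.PosDef) (x : ι → ℝ) :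
    P *ᵥ (P⁻¹ *ᵥ x) = x := by
  rw [mulVec_mulVec, mul_nonsing_inv _ ((isUnit_iff_isUnit_det _).mp hP.isUnit), one_mulVec]

lemma PosDef.inv_mulVec_mulVec {P : Matrix ι ι ℝ} (hP : P.PosDef) (x : ι → ℝ) :
    P⁻¹ *ᵥ (P *ᵥ x) = x := by
  rw [mulVec_mulVec, nonsing_inv_mul _ ((isUnit_iff_isUnit_det _).mp hP.isUnit), one_mulVec]

/-- Fenchel's inequality for the quadratic form of `P`. -/
lemma PosDef.two_mul_dotProduct_sub_le {P : Matrix ι ι ℝ} (hP : P.PosDef) (a u : ι → ℝ) :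
    2 * (a ⬝ᵥ u) - a ⬝ᵥ P *ᵥ a ≤ u ⬝ᵥ P⁻¹ *ᵥ u := by
  obtain ⟨b, rfl⟩ : ∃ b, P *ᵥ b = u := ⟨P⁻¹ *ᵥ u, hP.mulVec_inv_mulVec u⟩
  have h := hP.posSemidef.dotProduct_mulVec_self_nonneg (a - b)
  simp only [mulVec_sub, dotProduct_sub, sub_dotProduct] at h
  rw [hP.inv_mulVec_mulVec, dotProduct_comm (P *ᵥ b)]
  linarith [hP.isHermitian.dotProduct_mulVec_comm a b]

lemma dotProduct_add_smul_one_mulVec (z : ι → ℝ) :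
    z ⬝ᵥ (C + ε • 1) *ᵥ z = z ⬝ᵥ C *ᵥ z + ε * (z ⬝ᵥ z) := by
  rw [add_mulVec, smul_mulVec, one_mulVec, dotProduct_add, dotProduct_smul, smul_eq_mul]

lemma PosSemidef.mul_dotProduct_inv_mulVec_le (hC : C.PosSemidef) (hε : 0 < ε) (x : ι → ℝ) :
    ε * ((C + ε • 1)⁻¹ *ᵥ x ⬝ᵥ (C + ε • 1)⁻¹ *ᵥ x) ≤ x ⬝ᵥ (C + ε • 1)⁻¹ *ᵥ x := by
  have hP := hC.posDef_add_smul_one hε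
  obtain ⟨z, rfl⟩ : ∃ z, (C + ε • 1) *ᵥ z = x := ⟨_, hP.mulVec_inv_mulVec x⟩
  rw [hP.inv_mulVec_mulVec, dotProduct_comm ((C + ε • 1) *ᵥ z), dotProduct_add_smul_one_mulVec]
  linarith [hC.dotProduct_mulVec_self_nonneg z]

lemma PosSemidef.dotProduct_inv_add_smul_one_mulVec_le (hC : C.PosSemidef) (hε : 0 < ε)
    (a : ι → ℝ) : C *ᵥ a ⬝ᵥ (C + ε • 1)⁻¹ *ᵥ (C *ᵥ a) ≤ a ⬝ᵥ C *ᵥ a := by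
  set b := (C + ε • 1)⁻¹ *ᵥ (C *ᵥ a)
  have hb : (C + ε • 1) *ᵥ b = C *ᵥ a := (hC.posDef_add_smul_one hε).mulVec_inv_mulVec _
  have hPb : C *ᵥ a ⬝ᵥ b = b ⬝ᵥ C *ᵥ b + ε * (b ⬝ᵥ b) := by
    rw [← hb, dotProduct_comm, dotProduct_add_smul_one_mulVec]
  have hab := hC.dotProduct_mulVec_self_nonneg (a - b)
  simp only [mulVec_sub, dotProduct_sub, sub_dotProduct] at hab
  nlinarith [hC.isHermitian.dotProduct_mulVec_comm a b, dotProduct_comm (C *ᵥ a) b,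
    mul_nonneg hε.le (dotProduct_self_nonneg b)]

lemma PosSemidef.dotProduct_self_le_mul_dotProduct_inv_mulVec (hC : C.PosSemidef) (hε : 0 < ε)
    {K : ℝ} (hK0 : 0 ≤ K) (hK : ∀ x, x ⬝ᵥ C *ᵥ x ≤ K * (x ⬝ᵥ x)) (x : ι → ℝ) :
    x ⬝ᵥ x ≤ (K + ε) * (x ⬝ᵥ (C + ε • 1)⁻¹ *ᵥ x) := by
  have hL : 0 < K + ε := by positivity
  have hF := (hC.posDef_add_smul_one hε).two_mul_dotProduct_sub_le ((K + ε)⁻¹ • x) x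
  simp only [mulVec_smul, smul_dotProduct, dotProduct_smul, smul_eq_mul,
    dotProduct_add_smul_one_mulVec] at hF
  have hPx : (K + ε)⁻¹ * (x ⬝ᵥ C *ᵥ x + ε * (x ⬝ᵥ x)) ≤ x ⬝ᵥ x := by
    rw [inv_mul_le_iff₀ hL]
    linarith [hK x]
  rw [← inv_mul_le_iff₀ hL]
  nlinarith [inv_pos.2 hL]

end Regularization

end Matrix

section RegularizedLimit

variable {ι : Type*} [Fintype ι] [DecidableEq ι]
  {Φ : (ι → ℝ) → ℝ} {C : Matrix ι ι ℝ} {vhat a : ι → ℝ} {S : Set (ι → ℝ)} {veps : ℝ → ι → ℝ}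
  {ε : ℝ}

/-- The objective `J_ε` of the paper, with data misfit `Φ` and prior covariance `C + ε • 1`. -/
noncomputable def regularizedObjective (Φ : (ι → ℝ) → ℝ) (C : Matrix ι ι ℝ) (vhat : ι → ℝ)
    (ε : ℝ) (v : ι → ℝ) : ℝ :=
  Φ v + 1 / 2 * ((v - vhat) ⬝ᵥ (C + ε • 1)⁻¹ *ᵥ (v - vhat))

/-- The objective of the limiting problem in the variables `(a, v') = (a, C a)`. -/
noncomputable def penalizedObjective (Φ : (ι → ℝ) → ℝ) (C : Matrix ι ι ℝ) (vhat a : ι → ℝ) :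
    ℝ :=
  Φ (vhat + C *ᵥ a) + 1 / 2 * (a ⬝ᵥ C *ᵥ a)

lemma regularizedObjective_le_penalizedObjective (hC : C.PosSemidef) (hε : 0 < ε) (a : ι → ℝ) :
    regularizedObjective Φ C vhat ε (vhat + C *ᵥ a) ≤ penalizedObjective Φ C vhat a := by
  have := hC.dotProduct_inv_add_smul_one_mulVec_le hε a
  simp only [regularizedObjective, penalizedObjective, add_sub_cancel_left]
  linarith

lemma le_regularizedObjective (hC : C.PosSemidef) (hε : 0 < ε) (b v : ι → ℝ) :
    Φ v + b ⬝ᵥ (v - vhat) - 1 / 2 * (b ⬝ᵥ C *ᵥ b) - ε / 2 * (b ⬝ᵥ b) ≤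
      regularizedObjective Φ C vhat ε v := by
  have := (hC.posDef_add_smul_one hε).two_mul_dotProduct_sub_le b (v - vhat)
  rw [dotProduct_add_smul_one_mulVec] at this
  simp only [regularizedObjective]
  linarith

lemma IsMinOn.regularizedObjective_quadratic_growth {x z : ι → ℝ} (hΦ : ConvexOn ℝ univ Φ)
    (hS : Convex ℝ S) (hx : IsMinOn (regularizedObjective Φ C vhat ε) S x) (hxS : x ∈ S)
    (hzS : z ∈ S) :
    (z - x) ⬝ᵥ (C + ε • 1)⁻¹ *ᵥ (z - x) ≤
      4 * (regularizedObjective Φ C vhat ε z - regularizedObjective Φ C vhat ε x) := by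
  set m := (1 / 2 : ℝ) • x + (1 / 2 : ℝ) • z
  have hm : regularizedObjective Φ C vhat ε x ≤ regularizedObjective Φ C vhat ε m :=
    isMinOn_iff.1 hx m (hS hxS hzS (by norm_num) (by norm_num) (by norm_num))
  have hΦm : Φ m ≤ 1 / 2 * Φ x + 1 / 2 * Φ z :=
    hΦ.2 (mem_univ x) (mem_univ z) (by norm_num) (by norm_num) (by norm_num)
  have hmv : m - vhat = (1 / 2 : ℝ) • (x - vhat) + (1 / 2 : ℝ) • (z - vhat) := by module
  have hzx : z - x = (z - vhat) - (x - vhat) := by abel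
  simp only [regularizedObjective, hmv, hzx] at hm ⊢
  simp only [mulVec_add, mulVec_sub, mulVec_smul, dotProduct_add, dotProduct_sub, add_dotProduct,
    sub_dotProduct, smul_dotProduct, dotProduct_smul, smul_eq_mul] at hm ⊢
  linarith

lemma IsMinOn.regularization_penalty_le {x : ι → ℝ} {c : ℝ} (hC : C.PosSemidef) (hε : 0 < ε)
    (hc : ∀ v, c ≤ Φ v) (ha : vhat + C *ᵥ a ∈ S)
    (hx : IsMinOn (regularizedObjective Φ C vhat ε) S x) :
    (x - vhat) ⬝ᵥ (C + ε • 1)⁻¹ *ᵥ (x - vhat) ≤ 2 * (penalizedObjective Φ C vhat a - c) := by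
  have := (isMinOn_iff.1 hx _ ha).trans (regularizedObjective_le_penalizedObjective hC hε a)
  simp only [regularizedObjective] at this
  linarith [hc x]

/-- `u - ε • (C + ε • 1)⁻¹ *ᵥ u = C *ᵥ ((C + ε • 1)⁻¹ *ᵥ u)` lies in the closed range of `C`, and
the bounded penalty makes the correction `O(√ε)`. -/
lemma exists_mulVec_eq_of_tendsto (hC : C.PosSemidef) {e : ℕ → ℝ} {u : ℕ → ι → ℝ} {w : ι → ℝ}
    {R : ℝ} (he : Tendsto e atTop (𝓝[>] 0)) (hu : Tendsto u atTop (𝓝 w))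
    (hR : ∀ᶠ j in atTop, u j ⬝ᵥ (C + e j • 1)⁻¹ *ᵥ u j ≤ R) : ∃ b, C *ᵥ b = w := by
  have hpos : ∀ᶠ j in atTop, 0 < e j := he.eventually self_mem_nhdsWithin
  set r : ℕ → ι → ℝ := fun j => e j • (C + e j • 1)⁻¹ *ᵥ u j
  have hr : Tendsto r atTop (𝓝 0) := by
    have hsqrt : Tendsto (fun j => √(e j * R)) atTop (𝓝 0) := by
      simpa using ((tendsto_nhds_of_tendsto_nhdsWithin he).mul_const R).sqrt
    refine squeeze_zero_norm' ?_ hsqrt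
    filter_upwards [hpos, hR] with j hj hjR
    refine (norm_le_sqrt_dotProduct_self _).trans (Real.sqrt_le_sqrt ?_)
    have := (hC.mul_dotProduct_inv_mulVec_le hj (u j)).trans hjR
    simp only [r, smul_dotProduct, dotProduct_smul, smul_eq_mul]
    nlinarith
  have hrange : ∀ᶠ j in atTop, u j - r j ∈ LinearMap.range C.mulVecLin := by
    filter_upwards [hpos] with j hj
    refine ⟨(C + e j • 1)⁻¹ *ᵥ u j, ?_⟩
    have := (hC.posDef_add_smul_one hj).mulVec_inv_mulVec (u j)
    rw [add_mulVec, smul_mulVec, one_mulVec] at this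
    exact eq_sub_of_add_eq this
  simpa using (Submodule.closed_of_finiteDimensional _).mem_of_tendsto
    (by simpa using hu.sub hr) hrange

lemma eq_of_tendsto_regularized_minimizers (hC : C.PosSemidef) (hS : IsClosed S)
    (hSc : Convex ℝ S) (hΦ : Continuous Φ) (hΦc : ConvexOn ℝ univ Φ) {c : ℝ} (hc : ∀ v, c ≤ Φ v)
    (ha : vhat + C *ᵥ a ∈ S)
    (hamin : IsMinOn (penalizedObjective Φ C vhat) {b | vhat + C *ᵥ b ∈ S} a)
    (hvS : ∀ ε, 0 < ε → veps ε ∈ S)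
    (hvmin : ∀ ε, 0 < ε → IsMinOn (regularizedObjective Φ C vhat ε) S (veps ε))
    {e : ℕ → ℝ} {w : ι → ℝ} (he : Tendsto e atTop (𝓝[>] 0))
    (hw : Tendsto (fun j => veps (e j)) atTop (𝓝 w)) : w = vhat + C *ᵥ a := by
  obtain ⟨K, hK0, hK⟩ := exists_dotProduct_mulVec_le C
  have hpos : ∀ᶠ j in atTop, 0 < e j := he.eventually self_mem_nhdsWithin
  have hwS : w ∈ S := hS.mem_of_tendsto hw (hpos.mono fun j hj => hvS _ hj)
  obtain ⟨b, hb⟩ : ∃ b, C *ᵥ b = w - vhat := exists_mulVec_eq_of_tendsto hC he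
    (hw.sub_const vhat) (hpos.mono fun j hj => (hvmin _ hj).regularization_penalty_le hC hj hc ha)
  set v₀ := vhat + C *ᵥ a
  set M := penalizedObjective Φ C vhat a
  -- the Fenchel lower bound of `J_ε` with dual vector `b`, which is jointly continuous in `(ε, v)`
  set low : ℝ → (ι → ℝ) → ℝ := fun ε v =>
    Φ v + b ⬝ᵥ (v - vhat) - 1 / 2 * (b ⬝ᵥ C *ᵥ b) - ε / 2 * (b ⬝ᵥ b)
  have hest : ∀ ε, 0 < ε →
      (v₀ - veps ε) ⬝ᵥ (v₀ - veps ε) ≤ 4 * (K + ε) * (M - low ε (veps ε)) := by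
    intro ε hε
    have hgrowth := (hvmin ε hε).regularizedObjective_quadratic_growth hΦc hSc (hvS ε hε) ha
    have hv₀ : regularizedObjective Φ C vhat ε v₀ ≤ M :=
      regularizedObjective_le_penalizedObjective hC hε a
    have hlow : low ε (veps ε) ≤ regularizedObjective Φ C vhat ε (veps ε) :=
      le_regularizedObjective hC hε b (veps ε)
    calc _ ≤ (K + ε) * ((v₀ - veps ε) ⬝ᵥ (C + ε • 1)⁻¹ *ᵥ (v₀ - veps ε)) :=
          hC.dotProduct_self_le_mul_dotProduct_inv_mulVec hε hK0 hK _
      _ ≤ (K + ε) * (4 * (M - low ε (veps ε))) := by gcongr; linarith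
      _ = 4 * (K + ε) * (M - low ε (veps ε)) := by ring
  have hlim : (v₀ - w) ⬝ᵥ (v₀ - w) ≤ 4 * (K + 0) * (M - low 0 w) := by
    have hpair := (tendsto_nhds_of_tendsto_nhdsWithin he).prodMk_nhds hw
    have hlhs : Continuous fun v => (v₀ - v) ⬝ᵥ (v₀ - v) := by fun_prop
    have hrhs : Continuous fun p : ℝ × (ι → ℝ) => 4 * (K + p.1) * (M - low p.1 p.2) := by
      fun_prop
    exact le_of_tendsto_of_tendsto ((hlhs.tendsto w).comp hw) ((hrhs.tendsto (0, w)).comp hpair)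
      (hpos.mono fun j hj => hest _ hj)
  have hMw : M ≤ low 0 w := by
    have hMb : M ≤ penalizedObjective Φ C vhat b :=
      isMinOn_iff.1 hamin b (by simpa [hb] using hwS)
    simp only [penalizedObjective, hb, add_sub_cancel] at hMb
    simp only [low, hb, zero_div, zero_mul, sub_zero]
    linarith
  have hzero : (v₀ - w) ⬝ᵥ (v₀ - w) = 0 :=
    le_antisymm (hlim.trans (by nlinarith)) (dotProduct_self_nonneg _)
  exact (sub_eq_zero.1 (dotProduct_self_eq_zero.1 hzero)).symm

theorem tendsto_regularized_minimizers (hC : C.PosSemidef) (hS : IsClosed S)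
    (hSc : Convex ℝ S) (hΦ : Continuous Φ) (hΦc : ConvexOn ℝ univ Φ) (hΦb : BddBelow (range Φ))
    (ha : vhat + C *ᵥ a ∈ S)
    (hamin : IsMinOn (penalizedObjective Φ C vhat) {b | vhat + C *ᵥ b ∈ S} a)
    (hvS : ∀ ε, 0 < ε → veps ε ∈ S)
    (hvmin : ∀ ε, 0 < ε → IsMinOn (regularizedObjective Φ C vhat ε) S (veps ε)) :
    Tendsto veps (𝓝[>] 0) (𝓝 (vhat + C *ᵥ a)) := by
  obtain ⟨c, hc⟩ := hΦb
  rw [mem_lowerBounds, forall_mem_range] at hc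
  obtain ⟨K, hK0, hK⟩ := exists_dotProduct_mulVec_le C
  have hbdd : ∀ᶠ ε in 𝓝[>] 0,
      veps ε ∈ Metric.closedBall vhat √((K + 1) * (2 * (penalizedObjective Φ C vhat a - c))) := by
    filter_upwards [Ioo_mem_nhdsGT one_pos] with ε ⟨hε, hε1⟩
    rw [Metric.mem_closedBall, dist_eq_norm]
    refine (norm_le_sqrt_dotProduct_self _).trans (Real.sqrt_le_sqrt ?_)
    have hq := (hC.posDef_add_smul_one hε).inv.posSemidef.dotProduct_mulVec_self_nonneg
      (veps ε - vhat)
    calc _ ≤ (K + ε) * ((veps ε - vhat) ⬝ᵥ (C + ε • 1)⁻¹ *ᵥ (veps ε - vhat)) :=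
          hC.dotProduct_self_le_mul_dotProduct_inv_mulVec hε hK0 hK _
      _ ≤ (K + 1) * (2 * (penalizedObjective Φ C vhat a - c)) := by
          gcongr
          exact (hvmin ε hε).regularization_penalty_le hC hε hc ha
  refine tendsto_of_subseq_tendsto fun e he => ?_
  obtain ⟨w, -, φ, hφ, hw⟩ :=
    tendsto_subseq_of_frequently_bounded Metric.isBounded_closedBall (he.eventually hbdd).frequently
  refine ⟨φ, ?_⟩
  rwa [← eq_of_tendsto_regularized_minimizers hC hS hSc hΦ hΦc hc ha hamin hvS hvmin
    (he.comp hφ.tendsto_atTop) hw]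

end RegularizedLimit

theorem stmt_11 {m n k l : ℕ}
    (Γ : Matrix (Fin m) (Fin m) ℝ) (hΓ : Γ.PosDef)
    (C : Matrix (Fin n) (Fin n) ℝ) (hC : C.PosSemidef)
    (H : Matrix (Fin m) (Fin n) ℝ)
    (y : Fin m → ℝ) (vhat : Fin n → ℝ)
    (F : Matrix (Fin k) (Fin n) ℝ) (G : Matrix (Fin l) (Fin n) ℝ)
    (f : Fin k → ℝ) (g : Fin l → ℝ)
    (y' : Fin m → ℝ) (hy' : y' = y - H.mulVec vhat)
    (astar vstar : Fin n → ℝ)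
    -- (i): (astar, vstar) is feasible for the constrained penalized problem
    (hfeas : C.mulVec astar = vstar ∧ F.mulVec (vhat + vstar) = f ∧
      G.mulVec (vhat + vstar) ≤ g)
    -- and minimizes the penalized objective over the feasible set
    (hmin : ∀ a v' : Fin n → ℝ,
      C.mulVec a = v' → F.mulVec (vhat + v') = f → G.mulVec (vhat + v') ≤ g →
      (1 / 2) * ((y' - H.mulVec vstar) ⬝ᵥ Γ⁻¹.mulVec (y' - H.mulVec vstar)) +
        (1 / 2) * (astar ⬝ᵥ vstar) ≤
      (1 / 2) * ((y' - H.mulVec v') ⬝ᵥ Γ⁻¹.mulVec (y' - H.mulVec v')) +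
        (1 / 2) * (a ⬝ᵥ v'))
    -- the regularized objectives
    (Jeps : ℝ → (Fin n → ℝ) → ℝ)
    (hJeps : ∀ ε v, Jeps ε v =
      (1 / 2) * ((y - H.mulVec v) ⬝ᵥ Γ⁻¹.mulVec (y - H.mulVec v)) +
      (1 / 2) * ((v - vhat) ⬝ᵥ (C + ε • 1)⁻¹.mulVec (v - vhat)))
    -- (ii): for each ε > 0, veps ε is feasible and minimizes Jeps ε over the
    -- constraint set
    (veps : ℝ → Fin n → ℝ)
    (hveps_feas : ∀ ε : ℝ, 0 < ε →
      F.mulVec (veps ε) = f ∧ G.mulVec (veps ε) ≤ g)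
    (hveps_min : ∀ ε : ℝ, 0 < ε → ∀ v : Fin n → ℝ,
      F.mulVec v = f → G.mulVec v ≤ g → Jeps ε (veps ε) ≤ Jeps ε v) :
    Tendsto veps (𝓝[>] 0) (𝓝 (vhat + vstar)) := by
  obtain ⟨rfl, hFv, hGv⟩ := hfeas
  subst hy'
  have hΓ' := hΓ.inv.posSemidef
  set Φ : (Fin n → ℝ) → ℝ := fun v => 1 / 2 * ((y - H *ᵥ v) ⬝ᵥ Γ⁻¹ *ᵥ (y - H *ᵥ v))
  have hΦc : ConvexOn ℝ univ Φ :=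
    (hΓ'.convexOn_dotProduct_mulVec.comp_affineMap
      (AffineMap.const ℝ (Fin n → ℝ) y - H.mulVecLin.toAffineMap)).smul
      (by norm_num : (0 : ℝ) ≤ 1 / 2)
  have hΦb : BddBelow (range Φ) :=
    ⟨0, forall_mem_range.2 fun v =>
      mul_nonneg (by norm_num) (hΓ'.dotProduct_mulVec_self_nonneg _)⟩
  have hS : IsClosed {v : Fin n → ℝ | F *ᵥ v = f ∧ G *ᵥ v ≤ g} :=
    (isClosed_eq (f := (F *ᵥ ·)) (by fun_prop) continuous_const).inter
      (isClosed_le (f := (G *ᵥ ·)) (by fun_prop) continuous_const)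
  have hSc : Convex ℝ {v : Fin n → ℝ | F *ᵥ v = f ∧ G *ᵥ v ≤ g} :=
    ((convex_singleton f).linear_preimage F.mulVecLin).inter
      ((convex_Iic g).linear_preimage G.mulVecLin)
  refine tendsto_regularized_minimizers hC hS hSc (by fun_prop) hΦc hΦb ⟨hFv, hGv⟩
    (isMinOn_iff.2 fun b hb => ?_) hveps_feas fun ε hε => isMinOn_iff.2 fun v hv => ?_
  · simpa only [penalizedObjective, Φ, mulVec_add, sub_add_eq_sub_sub] using
      hmin b _ rfl hb.1 hb.2
  · have := hveps_min ε hε v hv.1 hv.2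
    rwa [hJeps, hJeps] at this
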